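/- Let p and q be coprime integers with p/q ∈ (0, 1/2), set ω = 2πp/q, s = sin(ω/2) and c = cos(ω/2). Let h₁ : ℝ → ℝ be a smooth 2π-periodic function. Then there exists a smooth 2π-periodic function θ₁ : ℝ → ℝ satisfying s·δ{θ₁} = δ{c·h₁} − σ{s·h₁′} and μ{θ₁} ≡ 0 if and only if μ{h₁′} ≡ 0 (equivalently, all Fourier coefficients of h₁ at indices in qℤ∖{0} vanish); and in that case the solution θ₁ is unique. -/

import Mathlib

open Real

/-- The average operator `μ{a}(t) = (1/q)·∑_{j=0}^{q−1} a(t + jω)`. -/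
noncomputable def avgOp (q : ℕ) (ω : ℝ) (a : ℝ → ℝ) : ℝ → ℝ :=
  fun t => (1 / (q : ℝ)) * ∑ j ∈ Finset.range q, a (t + j * ω)

/-- The `l`-th Fourier coefficient of a real-valued `2π`-periodic function. -/
noncomputable def fourierCoeffR (a : ℝ → ℝ) (l : ℤ) : ℂ :=
  (1 / (2 * (π : ℂ))) * ∫ t in (0:ℝ)..(2 * π),
    (a t : ℂ) * Complex.exp (-Complex.I * l * t)

namespace Stmt11Aux

open Finset

/-- Reindexing a sum of shifts. -/
lemma sum_shift {q : ℕ} {ω : ℝ} {a : ℝ → ℝ} (ha : ∀ t, a (t + q * ω) = a t) (t : ℝ) :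
    ∑ j ∈ range q, a (t + ω + j * ω) = ∑ j ∈ range q, a (t + j * ω) := by
  have key : ∀ j : ℕ, t + ω + (j : ℝ) * ω = t + ((j + 1 : ℕ) : ℝ) * ω := by
    intro j; push_cast; ring
  have h1 : ∑ j ∈ range q, a (t + ω + j * ω) = ∑ j ∈ range q, a (t + ((j + 1 : ℕ) : ℝ) * ω) :=
    Finset.sum_congr rfl fun j _ => by rw [key]
  have h2 := Finset.sum_range_succ' (fun j : ℕ => a (t + (j : ℝ) * ω)) q
  have h3 := Finset.sum_range_succ (fun j : ℕ => a (t + (j : ℝ) * ω)) q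
  have hq : a (t + (q : ℝ) * ω) = a t := ha t
  rw [h1]
  have h0 : a (t + ((0 : ℕ) : ℝ) * ω) = a t := by norm_num
  rw [h3, hq, h0] at h2
  linarith [h2]

/-- The weighted-sum difference identity. -/
lemma sum_weighted_shift {q : ℕ} {ω : ℝ} {a : ℝ → ℝ} (ha : ∀ t, a (t + q * ω) = a t) (t : ℝ) :
    ∑ j ∈ range q, (j : ℝ) * a (t + ω + j * ω)
      = ∑ j ∈ range q, (j : ℝ) * a (t + j * ω) + q * a t - ∑ j ∈ range q, a (t + j * ω) := by
  have key : ∀ j : ℕ, t + ω + (j : ℝ) * ω = t + ((j + 1 : ℕ) : ℝ) * ω := by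
    intro j; push_cast; ring
  have h1 : ∑ j ∈ range q, (j : ℝ) * a (t + ω + j * ω)
      = ∑ j ∈ range q, (((j + 1 : ℕ) : ℝ) * a (t + ((j + 1 : ℕ) : ℝ) * ω)
          - a (t + ((j + 1 : ℕ) : ℝ) * ω)) :=
    Finset.sum_congr rfl fun j _ => by rw [key]; push_cast; ring
  rw [h1, Finset.sum_sub_distrib]
  have h2 := Finset.sum_range_succ' (fun j : ℕ => (j : ℝ) * a (t + (j : ℝ) * ω)) q
  have h3 := Finset.sum_range_succ (fun j : ℕ => (j : ℝ) * a (t + (j : ℝ) * ω)) q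
  have h4 := Finset.sum_range_succ' (fun j : ℕ => a (t + (j : ℝ) * ω)) q
  have h5 := Finset.sum_range_succ (fun j : ℕ => a (t + (j : ℝ) * ω)) q
  have hq : a (t + (q : ℝ) * ω) = a t := ha t
  simp only [Nat.cast_zero, zero_mul, add_zero, zero_add, hq] at h2 h3 h4 h5
  have e1 : ∑ j ∈ range q, ((j:ℕ) + 1 : ℝ) * a (t + ((j + 1 : ℕ) : ℝ) * ω)
      = ∑ x ∈ range q, ((x:ℝ)) * a (t + (x:ℝ) * ω) + (q : ℝ) * a t := by
    push_cast at h2 h3 ⊢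
    linarith [h2, h3]
  have e2 : ∑ j ∈ range q, a (t + ((j + 1 : ℕ) : ℝ) * ω)
      = ∑ x ∈ range q, a (t + (x:ℝ) * ω) := by
    push_cast at h4 h5 ⊢
    linarith [h4, h5]
  push_cast at e1 e2 ⊢
  linarith [e1, e2]

/-- Iterated shift invariance. -/
lemma invariant_nat {ω : ℝ} {b : ℝ → ℝ} (hb : ∀ t, b (t + ω) = b t) (t : ℝ) (j : ℕ) :
    b (t + j * ω) = b t := by
  induction j with
  | zero => norm_num
  | succ n ih =>
      have : t + ((n + 1 : ℕ) : ℝ) * ω = (t + n * ω) + ω := by push_cast; ring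
      rw [this, hb, ih]

/-- Fourier coefficient of a derivative (integration by parts). -/
lemma key_deriv (f : ℝ → ℝ) (hf : ContDiff ℝ (⊤ : ℕ∞) f) (hper : ∀ t, f (t + 2*π) = f t) (l : ℤ) :
    fourierCoeffR (deriv f) l = Complex.I * l * fourierCoeffR f l := by
  have πpos := Real.pi_pos
  have hdiff : Differentiable ℝ f := hf.differentiable (by simp)
  have hdc : Continuous (deriv f) := by
    have h' : ContDiff ℝ (((⊤ : ℕ∞) : WithTop ℕ∞) + 1) f := by
      rwa [show (((⊤ : ℕ∞) : WithTop ℕ∞) + 1) = ((⊤ : ℕ∞) : WithTop ℕ∞) from rfl]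
    exact (contDiff_succ_iff_deriv.mp h').2.2.continuous
  have hu : ∀ x ∈ Set.uIcc (0:ℝ) (2*π), HasDerivAt (fun t : ℝ => ((f t : ℝ) : ℂ))
      ((deriv f x : ℝ) : ℂ) x := fun x _ => ((hdiff x).hasDerivAt).ofReal_comp
  have hv : ∀ x ∈ Set.uIcc (0:ℝ) (2*π), HasDerivAt (fun t : ℝ => Complex.exp (-Complex.I * l * t))
      (-Complex.I * l * Complex.exp (-Complex.I * l * x)) x := by
    intro x _
    have h1 : HasDerivAt (fun t : ℝ => ((t : ℝ) : ℂ)) 1 x := (hasDerivAt_id x).ofReal_comp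
    have h2 : HasDerivAt (fun t : ℝ => (-Complex.I * l) * ((t : ℝ) : ℂ)) (-Complex.I * l) x := by
      simpa using h1.const_mul (-Complex.I * (l:ℂ))
    have h3 := h2.cexp
    simp only [mul_assoc] at *
    convert h3 using 1
    ring
  have hu' : IntervalIntegrable (fun x : ℝ => ((deriv f x : ℝ) : ℂ)) MeasureTheory.volume 0 (2*π) :=
    (Complex.continuous_ofReal.comp hdc).intervalIntegrable _ _
  have hv' : IntervalIntegrable (fun x : ℝ => -Complex.I * l * Complex.exp (-Complex.I * l * x))
      MeasureTheory.volume 0 (2*π) := by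
    apply Continuous.intervalIntegrable
    exact continuous_const.mul (Complex.continuous_exp.comp (by continuity))
  have key := intervalIntegral.integral_deriv_mul_eq_sub hu hv hu' hv'
  have hbd : ((f (2*π) : ℝ) : ℂ) * Complex.exp (-Complex.I * l * ((2*π : ℝ) : ℂ))
      - ((f 0 : ℝ) : ℂ) * Complex.exp (-Complex.I * l * ((0:ℝ) : ℂ)) = 0 := by
    have hf2 : f (2*π) = f 0 := by
      have := hper 0
      rwa [zero_add] at this
    rw [hf2]
    rw [show (-Complex.I * l * ((2*π : ℝ) : ℂ)) = ((-l : ℤ) : ℂ) * (2*π*Complex.I) from by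
      push_cast; ring]
    rw [Complex.exp_int_mul_two_pi_mul_I]
    simp
  rw [hbd] at key
  have hsplit : (∫ x in (0:ℝ)..(2*π), (((deriv f x : ℝ) : ℂ) * Complex.exp (-Complex.I * l * x)
        + ((f x : ℝ) : ℂ) * (-Complex.I * l * Complex.exp (-Complex.I * l * x))))
      = (∫ x in (0:ℝ)..(2*π), ((deriv f x : ℝ) : ℂ) * Complex.exp (-Complex.I * l * x))
        + (∫ x in (0:ℝ)..(2*π), ((f x : ℝ) : ℂ)
            * (-Complex.I * l * Complex.exp (-Complex.I * l * x))) := by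
    apply intervalIntegral.integral_add
    · exact ((Complex.continuous_ofReal.comp hdc).mul
        (Complex.continuous_exp.comp (by continuity))).intervalIntegrable _ _
    · exact ((Complex.continuous_ofReal.comp hf.continuous).mul
        (continuous_const.mul (Complex.continuous_exp.comp (by continuity)))).intervalIntegrable _ _
  rw [hsplit] at key
  have hpull : (∫ x in (0:ℝ)..(2*π), ((f x : ℝ) : ℂ)
        * (-Complex.I * l * Complex.exp (-Complex.I * l * x)))
      = (-Complex.I * l) * ∫ x in (0:ℝ)..(2*π), ((f x : ℝ) : ℂ)
          * Complex.exp (-Complex.I * l * x) := by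
    rw [← intervalIntegral.integral_const_mul]
    refine intervalIntegral.integral_congr fun x _ => ?_
    ring
  rw [hpull] at key
  unfold fourierCoeffR
  have h2π : ((2*π : ℝ) : ℂ) ≠ 0 := by
    simp [Real.pi_ne_zero]
  have : (∫ x in (0:ℝ)..(2*π), ((deriv f x : ℝ) : ℂ) * Complex.exp (-Complex.I * l * x))
      = (Complex.I * l) * ∫ x in (0:ℝ)..(2*π), ((f x : ℝ) : ℂ)
          * Complex.exp (-Complex.I * l * x) := by
    have := key
    linear_combination key
  rw [this]
  ring

/-- Fourier coefficient of a translate. -/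
lemma key_shift (a : ℝ → ℝ) (ha : Continuous a) (hper : ∀ t, a (t + 2*π) = a t) (τ : ℝ) (l : ℤ) :
    fourierCoeffR (fun t => a (t + τ)) l
      = Complex.exp (Complex.I * l * τ) * fourierCoeffR a l := by
  unfold fourierCoeffR
  set G : ℝ → ℂ := fun u => ((a u : ℝ) : ℂ) * Complex.exp (-Complex.I * l * u) with hG
  have hGper : Function.Periodic G (2*π) := by
    intro u
    simp only [hG]
    rw [hper u]
    congr 1
    rw [show (-Complex.I * l * ((u + 2*π : ℝ) : ℂ))
      = (-Complex.I * l * (u:ℂ)) + ((-l : ℤ) : ℂ) * (2*π*Complex.I) by push_cast; ring]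
    rw [Complex.exp_add, Complex.exp_int_mul_two_pi_mul_I, mul_one]
  have step1 : ∀ t : ℝ, ((a (t + τ) : ℝ) : ℂ) * Complex.exp (-Complex.I * l * t)
      = Complex.exp (Complex.I * l * τ) * G (t + τ) := by
    intro t
    simp only [hG]
    rw [show Complex.exp (Complex.I * l * τ)
        * (((a (t + τ) : ℝ) : ℂ) * Complex.exp (-Complex.I * l * ((t + τ : ℝ) : ℂ)))
      = ((a (t + τ) : ℝ) : ℂ) * (Complex.exp (Complex.I * l * τ)
        * Complex.exp (-Complex.I * l * ((t + τ : ℝ) : ℂ))) from by ring]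
    rw [← Complex.exp_add]
    congr 2
    push_cast
    ring
  simp_rw [step1]
  rw [intervalIntegral.integral_const_mul]
  rw [intervalIntegral.integral_comp_add_right (fun u => G u) τ]
  have := hGper.intervalIntegral_add_eq τ 0
  rw [zero_add] at this
  rw [show (0:ℝ) + τ = τ from by ring, show (2*π + τ) = τ + 2*π from by ring, this]
  ring

/-- Fourier coefficient of the average operator. -/
lemma key_avg (q : ℕ) (ω : ℝ) (a : ℝ → ℝ) (ha : Continuous a) (l : ℤ) :
    fourierCoeffR (avgOp q ω a) l
      = (1 / (q:ℂ)) * ∑ j ∈ range q, fourierCoeffR (fun t => a (t + j * ω)) l := by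
  unfold fourierCoeffR avgOp
  have hint : ∀ j : ℕ, IntervalIntegrable
      (fun t => ((a (t + (j:ℝ)*ω) : ℝ) : ℂ) * Complex.exp (-Complex.I * l * t))
      MeasureTheory.volume 0 (2*π) := by
    intro j
    apply Continuous.intervalIntegrable
    exact (Complex.continuous_ofReal.comp (ha.comp (continuous_id.add continuous_const))).mul
      (Complex.continuous_exp.comp (by continuity))
  have step1 : ∀ t : ℝ, (((1 / (q:ℝ)) * ∑ j ∈ range q, a (t + (j:ℝ)*ω) : ℝ) : ℂ)
        * Complex.exp (-Complex.I * l * t)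
      = (1/(q:ℂ)) * ∑ j ∈ range q,
          ((a (t + (j:ℝ)*ω) : ℝ) : ℂ) * Complex.exp (-Complex.I * l * t) := by
    intro t
    push_cast
    rw [mul_assoc, Finset.sum_mul]
  simp_rw [step1]
  rw [intervalIntegral.integral_const_mul]
  rw [intervalIntegral.integral_finset_sum
      (f := fun (j : ℕ) (t : ℝ) => ((a (t + (j:ℝ)*ω) : ℝ) : ℂ) * Complex.exp (-Complex.I * l * t))
      (fun j _ => hint j)]
  simp only [Finset.mul_sum]
  refine Finset.sum_congr rfl fun j _ => ?_
  ring

/-- A continuous `2π`-periodic function with vanishing Fourier coefficients is zero. -/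
lemma key_inj (f : ℝ → ℝ) (hf : Continuous f) (hper : ∀ t, f (t + 2*π) = f t)
    (h : ∀ l : ℤ, fourierCoeffR f l = 0) : ∀ t, f t = 0 := by
  have πpos := Real.pi_pos
  haveI : Fact (0 < 2*π) := ⟨by positivity⟩
  have hperC : Function.Periodic (fun t : ℝ => ((f t : ℝ) : ℂ)) (2*π) := fun t => by
    simp [hper t]
  set F : AddCircle (2*π) → ℂ := hperC.lift with hF
  have hFcont : Continuous F := by
    apply Continuous.quotient_liftOn'
    exact Complex.continuous_ofReal.comp hf
  set FC : C(AddCircle (2*π), ℂ) := ⟨F, hFcont⟩ with hFC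
  have hcoeff : ∀ l : ℤ, fourierCoeff (FC : AddCircle (2*π) → ℂ) l = fourierCoeffR f l := by
    intro l
    rw [fourierCoeff_eq_intervalIntegral _ l 0]
    rw [zero_add]
    unfold fourierCoeffR
    have : (∫ x in (0:ℝ)..(2*π), (fourier (-l) (x : AddCircle (2*π))) • FC (x : AddCircle (2*π)))
        = ∫ x in (0:ℝ)..(2*π), ((f x : ℝ) : ℂ) * Complex.exp (-Complex.I * l * x) := by
      refine intervalIntegral.integral_congr fun x _ => ?_
      rw [fourier_coe_apply]
      have hFx : FC (x : AddCircle (2*π)) = ((f x : ℝ) : ℂ) := by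
        show F (x : AddCircle (2*π)) = _
        simp only [hF]
        exact hperC.lift_coe x
      rw [hFx, smul_eq_mul]
      rw [show (2 * (π:ℂ) * Complex.I * ((-l : ℤ) : ℂ) * (x:ℂ) / ((2*π : ℝ) : ℂ))
          = -Complex.I * l * x from by
        have hπC : (π : ℂ) ≠ 0 := by exact_mod_cast Real.pi_ne_zero
        push_cast
        field_simp]
      ring
    rw [this, Complex.real_smul]
    push_cast
    ring
  have hgzero : ContinuousMap.toLp (E := ℂ) 2 AddCircle.haarAddCircle ℂ FC = 0 := by
    have hrepr : (fourierBasis.repr (ContinuousMap.toLp (E := ℂ) 2 AddCircle.haarAddCircle ℂ FC)) = 0 := by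
      ext l
      rw [fourierBasis_repr, fourierCoeff_toLp, hcoeff l, h l]
      rfl
    exact (LinearIsometryEquiv.map_eq_zero_iff _).mp hrepr
  have hae : (FC : AddCircle (2*π) → ℂ) =ᵐ[AddCircle.haarAddCircle] (0 : AddCircle (2*π) → ℂ) := by
    have h1 := ContinuousMap.coeFn_toLp (p := 2) (AddCircle.haarAddCircle) (𝕜 := ℂ) FC
    rw [hgzero] at h1
    have h2 := MeasureTheory.Lp.coeFn_zero (E := ℂ) (p := 2) (μ := AddCircle.haarAddCircle (T := 2*π))
    exact (h1.symm.trans h2)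
  have hFeq : (FC : AddCircle (2*π) → ℂ) = 0 :=
    (Continuous.ae_eq_iff_eq AddCircle.haarAddCircle hFcont continuous_zero).mp hae
  intro t
  have : F (t : AddCircle (2*π)) = 0 := by
    rw [show F = (FC : AddCircle (2*π) → ℂ) from rfl, hFeq]
    rfl
  have h2 : ((f t : ℝ) : ℂ) = 0 := by
    rw [← hperC.lift_coe t]
    exact this
  exact_mod_cast h2

end Stmt11Aux

theorem stmt_11 (p q : ℕ) (hco : Nat.Coprime p q) (hp : 1 ≤ p) (hq : 2 * p < q)
    (ω s c : ℝ) (hω : ω = 2 * π * p / q)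
    (hs : s = Real.sin (ω / 2)) (hc : c = Real.cos (ω / 2))
    (h₁ : ℝ → ℝ) (h₁sm : ContDiff ℝ (⊤ : ℕ∞) h₁) (h₁per : ∀ t, h₁ (t + 2 * π) = h₁ t) :
    ((∃ θ₁ : ℝ → ℝ, ContDiff ℝ (⊤ : ℕ∞) θ₁ ∧ (∀ t, θ₁ (t + 2 * π) = θ₁ t) ∧
        (∀ t, s * (θ₁ (t + ω) - θ₁ t)
          = (c * h₁ (t + ω) - c * h₁ t) - (s * deriv h₁ (t + ω) + s * deriv h₁ t)) ∧
        (∀ t, avgOp q ω θ₁ t = 0))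
      ↔ (∀ t, avgOp q ω (deriv h₁) t = 0)) ∧
    ((∀ t, avgOp q ω (deriv h₁) t = 0)
      ↔ (∀ l : ℤ, l ≠ 0 → (q : ℤ) ∣ l → fourierCoeffR h₁ l = 0)) ∧
    ((∀ t, avgOp q ω (deriv h₁) t = 0) →
      ∃! θ₁ : ℝ → ℝ, ContDiff ℝ (⊤ : ℕ∞) θ₁ ∧ (∀ t, θ₁ (t + 2 * π) = θ₁ t) ∧
        (∀ t, s * (θ₁ (t + ω) - θ₁ t)
          = (c * h₁ (t + ω) - c * h₁ t) - (s * deriv h₁ (t + ω) + s * deriv h₁ t)) ∧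
        (∀ t, avgOp q ω θ₁ t = 0)) := by
  have πpos := Real.pi_pos
  have hq0 : 0 < q := by omega
  have hq0R : (q:ℝ) ≠ 0 := Nat.cast_ne_zero.mpr hq0.ne'
  have hp0 : (0:ℝ) < p := by exact_mod_cast Nat.lt_of_lt_of_le Nat.zero_lt_one hp
  have hqpos : (0:ℝ) < q := Nat.cast_pos.mpr hq0
  have hω0 : 0 < ω := by rw [hω]; positivity
  have hωπ : ω < π := by
    rw [hω, div_lt_iff₀ hqpos]
    have h2pq : (2*p : ℝ) < q := by exact_mod_cast hq
    nlinarith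
  have hs0 : 0 < s := by
    rw [hs]
    apply Real.sin_pos_of_pos_of_lt_pi <;> linarith
  have hsne : s ≠ 0 := hs0.ne'
  have hqω : (q:ℝ) * ω = p * (2*π) := by rw [hω]; field_simp
  have hperq : ∀ a : ℝ → ℝ, (∀ t, a (t + 2*π) = a t) → ∀ t, a (t + q * ω) = a t := by
    intro a hap t
    have hP : Function.Periodic a (2*π) := hap
    have h2 := (hP.nat_mul p) t
    rw [hqω]
    exact_mod_cast h2
  have hd : ContDiff ℝ (⊤ : ℕ∞) (deriv h₁) := by
    have h' : ContDiff ℝ (((⊤ : ℕ∞) : WithTop ℕ∞) + 1) h₁ := by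
      rwa [show (((⊤ : ℕ∞) : WithTop ℕ∞) + 1) = ((⊤ : ℕ∞) : WithTop ℕ∞) from rfl]
    exact (contDiff_succ_iff_deriv.mp h').2.2
  have hdc : Continuous (deriv h₁) := hd.continuous
  have hdper : ∀ t, deriv h₁ (t + 2*π) = deriv h₁ t := by
    intro t
    have hfe : (fun y => h₁ (y + 2*π)) = h₁ := funext h₁per
    rw [← deriv_comp_add_const, hfe]
  have hdq := hperq _ hdper
  have hh₁q := hperq _ h₁per
  set r : ℝ → ℝ := fun t =>
    (c * h₁ (t + ω) - c * h₁ t) - (s * deriv h₁ (t + ω) + s * deriv h₁ t) with hrdef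
  have hrper : ∀ t, r (t + 2*π) = r t := by
    intro t
    simp only [hrdef]
    have e1 : t + 2*π + ω = (t + ω) + 2*π := by ring
    rw [e1, h₁per (t+ω), h₁per t, hdper (t+ω), hdper t]
  have hrq := hperq _ hrper
  -- the common sum computation
  have rsum_eq : ∀ t, ∑ j ∈ Finset.range q, r (t + j*ω)
      = -(2*s) * ∑ j ∈ Finset.range q, deriv h₁ (t + j*ω) := by
    intro t
    have e1 : ∀ j : ℕ, t + (j:ℝ)*ω + ω = t + ω + (j:ℝ)*ω := fun j => by ring
    simp only [hrdef]
    simp only [e1, Finset.sum_sub_distrib, Finset.sum_add_distrib, ← Finset.mul_sum]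
    rw [Stmt11Aux.sum_shift hh₁q t, Stmt11Aux.sum_shift hdq t]
    ring
  -- necessity
  have necessity : ∀ θ : ℝ → ℝ, (∀ t, θ (t + 2*π) = θ t) →
      (∀ t, s * (θ (t + ω) - θ t) = r t) → ∀ t, avgOp q ω (deriv h₁) t = 0 := by
    intro θ θper θeq t
    have hθq := hperq θ θper
    have hsum : ∑ j ∈ Finset.range q, s * (θ (t + j*ω + ω) - θ (t + j*ω))
        = ∑ j ∈ Finset.range q, r (t + j*ω) :=
      Finset.sum_congr rfl fun j _ => θeq (t + j*ω)
    have e1 : ∀ j : ℕ, t + (j:ℝ)*ω + ω = t + ω + (j:ℝ)*ω := fun j => by ring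
    simp only [hrdef, e1, mul_sub, Finset.sum_sub_distrib, Finset.sum_add_distrib,
      ← Finset.mul_sum] at hsum
    rw [Stmt11Aux.sum_shift hθq t, Stmt11Aux.sum_shift hh₁q t,
      Stmt11Aux.sum_shift hdq t] at hsum
    have hD : ∑ j ∈ Finset.range q, deriv h₁ (t + j*ω) = 0 := by
      have h2 : s * (2 * ∑ j ∈ Finset.range q, deriv h₁ (t + j*ω)) = 0 := by linarith
      rcases mul_eq_zero.mp h2 with h' | h'
      · exact absurd h' hsne
      · linarith
    unfold avgOp
    rw [hD]
    ring
  -- existence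
  have existence : (∀ t, avgOp q ω (deriv h₁) t = 0) →
      ∃ θ : ℝ → ℝ, ContDiff ℝ (⊤ : ℕ∞) θ ∧ (∀ t, θ (t + 2*π) = θ t) ∧
        (∀ t, s * (θ (t + ω) - θ t) = r t) ∧ (∀ t, avgOp q ω θ t = 0) := by
    intro hA
    have hDsum : ∀ t, ∑ j ∈ Finset.range q, deriv h₁ (t + j*ω) = 0 := by
      intro t
      have h := hA t
      unfold avgOp at h
      rcases mul_eq_zero.mp h with h' | h'
      · exact absurd h' (by simp [hq0R])
      · exact h'
    have hrsum : ∀ t, ∑ j ∈ Finset.range q, r (t + j*ω) = 0 := by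
      intro t; rw [rsum_eq t, hDsum t]; ring
    set θ₀ : ℝ → ℝ := fun t => (1/(s*q)) * ∑ j ∈ Finset.range q, (j:ℝ) * r (t + j*ω)
      with hθ₀def
    have hθ₀q : ∀ t, θ₀ (t + q*ω) = θ₀ t := by
      intro t
      simp only [hθ₀def]
      congr 1
      refine Finset.sum_congr rfl fun j _ => ?_
      have e : t + (q:ℝ)*ω + (j:ℝ)*ω = (t + (j:ℝ)*ω) + (q:ℝ)*ω := by ring
      rw [e, hrq]
    have hθ₀diff : ∀ t, θ₀ (t + ω) - θ₀ t = r t / s := by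
      intro t
      have hw := Stmt11Aux.sum_weighted_shift hrq t
      simp only [hθ₀def]
      rw [hw, hrsum t, sub_zero, ← mul_sub, add_sub_cancel_left]
      rw [one_div, mul_inv, mul_assoc, inv_mul_cancel_left₀ hq0R, div_eq_inv_mul]
    have hθ₀per : ∀ t, θ₀ (t + 2*π) = θ₀ t := by
      intro t
      simp only [hθ₀def]
      congr 1
      refine Finset.sum_congr rfl fun j _ => ?_
      have e : t + 2*π + (j:ℝ)*ω = (t + (j:ℝ)*ω) + 2*π := by ring
      rw [e, hrper]
    set θA : ℝ → ℝ := fun t => avgOp q ω θ₀ t with hθAdef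
    have hθAinv : ∀ t, θA (t + ω) = θA t := by
      intro t
      simp only [hθAdef]
      unfold avgOp
      congr 1
      exact Stmt11Aux.sum_shift hθ₀q t
    have hθAper : ∀ t, θA (t + 2*π) = θA t := by
      intro t
      simp only [hθAdef]
      unfold avgOp
      congr 1
      refine Finset.sum_congr rfl fun j _ => ?_
      have e : t + 2*π + (j:ℝ)*ω = (t + (j:ℝ)*ω) + 2*π := by ring
      rw [e, hθ₀per]
    refine ⟨fun t => θ₀ t - θA t, ?_, ?_, ?_, ?_⟩
    · -- smoothness
      have shift_sm : ∀ (u : ℝ → ℝ), ContDiff ℝ (⊤ : ℕ∞) u → ∀ τ : ℝ,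
          ContDiff ℝ (⊤ : ℕ∞) (fun t => u (t + τ)) := fun u hu τ =>
        hu.comp (contDiff_id.add contDiff_const)
      have hrsm : ContDiff ℝ (⊤ : ℕ∞) r := by
        simp only [hrdef]
        exact ((contDiff_const.mul (shift_sm _ h₁sm ω)).sub
          (contDiff_const.mul h₁sm)).sub
          ((contDiff_const.mul (shift_sm _ hd ω)).add (contDiff_const.mul hd))
      have hθ₀sm : ContDiff ℝ (⊤ : ℕ∞) θ₀ := by
        simp only [hθ₀def]
        exact contDiff_const.mul (ContDiff.sum fun j _ =>
          contDiff_const.mul (shift_sm _ hrsm _))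
      have hθAsm : ContDiff ℝ (⊤ : ℕ∞) θA := by
        simp only [hθAdef]
        unfold avgOp
        exact contDiff_const.mul (ContDiff.sum fun j _ => shift_sm _ hθ₀sm _)
      exact hθ₀sm.sub hθAsm
    · intro t
      simp only
      rw [hθ₀per t, hθAper t]
    · intro t
      simp only
      have : θ₀ (t + ω) - θA (t + ω) - (θ₀ t - θA t)
          = (θ₀ (t + ω) - θ₀ t) - (θA (t + ω) - θA t) := by ring
      rw [this, hθ₀diff t, hθAinv t]
      field_simp
      ring
    · intro t
      unfold avgOp
      have hconst : ∀ j ∈ Finset.range q, θA (t + (j:ℝ)*ω) = θA t := fun j _ =>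
        Stmt11Aux.invariant_nat hθAinv t j
      have : ∑ j ∈ Finset.range q, (θ₀ (t + (j:ℝ)*ω) - θA (t + (j:ℝ)*ω))
          = ∑ j ∈ Finset.range q, θ₀ (t + (j:ℝ)*ω) - (q:ℝ) * θA t := by
        rw [Finset.sum_sub_distrib, Finset.sum_congr rfl hconst, Finset.sum_const,
          Finset.card_range, nsmul_eq_mul]
      rw [this]
      have hθAval : θA t = (1/(q:ℝ)) * ∑ j ∈ Finset.range q, θ₀ (t + (j:ℝ)*ω) := rfl
      rw [hθAval]
      rw [← mul_assoc, mul_one_div_cancel hq0R, one_mul, sub_self, mul_zero]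
  -- uniqueness
  have uniqueness : ∀ θ θ' : ℝ → ℝ,
      ((∀ t, s * (θ (t + ω) - θ t) = r t) ∧ (∀ t, avgOp q ω θ t = 0)) →
      ((∀ t, s * (θ' (t + ω) - θ' t) = r t) ∧ (∀ t, avgOp q ω θ' t = 0)) →
      θ = θ' := by
    intro θ θ' ⟨heq, havg⟩ ⟨heq', havg'⟩
    funext t
    set d : ℝ → ℝ := fun u => θ u - θ' u with hddef
    have hdinv : ∀ u, d (u + ω) = d u := by
      intro u
      have h1 := heq u
      have h2 := heq' u
      have : s * (d (u + ω) - d u) = 0 := by simp only [hddef]; nlinarith [h1, h2]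
      have h3 : d (u + ω) - d u = 0 := by
        rcases mul_eq_zero.mp this with h' | h'
        · exact absurd h' hsne
        · exact h'
      linarith
    have hdavg : avgOp q ω d t = 0 := by
      unfold avgOp
      have h1 := havg t
      have h2 := havg' t
      unfold avgOp at h1 h2
      simp only [hddef]
      rw [Finset.sum_sub_distrib, mul_sub]
      linarith [h1, h2]
    have hdconst : ∀ j ∈ Finset.range q, d (t + (j:ℝ)*ω) = d t := fun j _ =>
      Stmt11Aux.invariant_nat hdinv t j
    have : avgOp q ω d t = d t := by
      unfold avgOp
      rw [Finset.sum_congr rfl hdconst, Finset.sum_const, Finset.card_range, nsmul_eq_mul]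
      field_simp
    have hd0 : d t = 0 := by rw [← this, hdavg]
    have : θ t - θ' t = 0 := hd0
    linarith
  have convert_eq : ∀ θ : ℝ → ℝ,
      (∀ t, s * (θ (t + ω) - θ t)
          = (c * h₁ (t + ω) - c * h₁ t) - (s * deriv h₁ (t + ω) + s * deriv h₁ t))
        ↔ (∀ t, s * (θ (t + ω) - θ t) = r t) := by
    intro θ
    constructor <;> intro h t <;> simpa only [hrdef] using h t
  refine ⟨?_, ?_, ?_⟩
  · constructor
    · rintro ⟨θ, _, θper, θeq, _⟩
      exact necessity θ θper ((convert_eq θ).mp θeq)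
    · intro hA
      obtain ⟨θ, hsm, hper2, heq, havg⟩ := existence hA
      exact ⟨θ, hsm, hper2, (convert_eq θ).mpr heq, havg⟩
  · -- Fourier characterization
    constructor
    · intro hA l hl0 hldvd
      have h0 : fourierCoeffR (avgOp q ω (deriv h₁)) l = 0 := by
        have hz : avgOp q ω (deriv h₁) = fun _ => 0 := funext hA
        rw [hz]
        unfold fourierCoeffR
        simp
      rw [Stmt11Aux.key_avg q ω _ hdc l] at h0
      have hωC : (ω:ℂ) = 2*π*p/q := by rw [hω]; push_cast; ring
      have hqC : (q:ℂ) ≠ 0 := Nat.cast_ne_zero.mpr hq0.ne'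
      have hexp1 : ∀ j : ℕ, Complex.exp (Complex.I * l * ((j:ℝ)*ω : ℝ)) = 1 := by
        intro j
        obtain ⟨m, rfl⟩ := hldvd
        have harg : Complex.I * (((q:ℤ)*m : ℤ):ℂ) * (((j:ℝ)*ω : ℝ):ℂ)
            = ((m*p*j : ℤ):ℂ) * (2*π*Complex.I) := by
          push_cast
          rw [hωC]
          field_simp
        rw [harg, Complex.exp_int_mul_two_pi_mul_I]
      have hterm : ∀ j ∈ Finset.range q,
          fourierCoeffR (fun t => deriv h₁ (t + (j:ℝ)*ω)) l = fourierCoeffR (deriv h₁) l := by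
        intro j _
        rw [Stmt11Aux.key_shift _ hdc hdper _ l, hexp1 j, one_mul]
      rw [Finset.sum_congr rfl hterm, Finset.sum_const, Finset.card_range, nsmul_eq_mul] at h0
      have hcd : fourierCoeffR (deriv h₁) l = 0 := by
        field_simp at h0
        exact h0
      rw [Stmt11Aux.key_deriv h₁ h₁sm h₁per l] at hcd
      have hlC : (l:ℂ) ≠ 0 := Int.cast_ne_zero.mpr hl0
      have := mul_eq_zero.mp hcd
      rcases this with h' | h'
      · exact absurd h' (by simp [Complex.I_ne_zero, hlC, mul_eq_zero, not_or])
      · exact h'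
    · intro hB
      have havgcont : Continuous (avgOp q ω (deriv h₁)) := by
        unfold avgOp
        exact continuous_const.mul (continuous_finset_sum _ fun j _ =>
          hdc.comp (continuous_id.add continuous_const))
      have havgper : ∀ t, avgOp q ω (deriv h₁) (t + 2*π) = avgOp q ω (deriv h₁) t := by
        intro t
        unfold avgOp
        congr 1
        refine Finset.sum_congr rfl fun j _ => ?_
        have e : t + 2*π + (j:ℝ)*ω = (t + (j:ℝ)*ω) + 2*π := by ring
        rw [e, hdper]
      apply Stmt11Aux.key_inj _ havgcont havgper
      intro l
      rw [Stmt11Aux.key_avg q ω _ hdc l]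
      have hterm : ∀ j ∈ Finset.range q,
          fourierCoeffR (fun t => deriv h₁ (t + (j:ℝ)*ω)) l
            = Complex.exp (Complex.I * l * ω) ^ j * fourierCoeffR (deriv h₁) l := by
        intro j _
        rw [Stmt11Aux.key_shift _ hdc hdper _ l, ← Complex.exp_nat_mul]
        congr 2
        push_cast
        ring
      rw [Finset.sum_congr rfl hterm, ← Finset.sum_mul]
      have hωC : (ω:ℂ) = 2*π*p/q := by rw [hω]; push_cast; ring
      have hqC : (q:ℂ) ≠ 0 := Nat.cast_ne_zero.mpr hq0.ne'
      by_cases hdvd : (q:ℤ) ∣ l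
      · by_cases hl0 : l = 0
        · subst hl0
          rw [Stmt11Aux.key_deriv h₁ h₁sm h₁per 0]
          simp
        · rw [Stmt11Aux.key_deriv h₁ h₁sm h₁per l, hB l hl0 hdvd]
          simp
      · have hz1 : Complex.exp (Complex.I * l * ω) ≠ 1 := by
          intro hcontra
          rw [Complex.exp_eq_one_iff] at hcontra
          obtain ⟨n, hn⟩ := hcontra
          have hn' : Complex.I * ((l:ℂ) * ω) = Complex.I * ((n:ℂ) * (2*π)) := by
            rw [← mul_assoc]
            rw [hn]
            ring
          have hre : (l:ℝ) * ω = (n:ℝ) * (2*π) := by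
            have := mul_left_cancel₀ Complex.I_ne_zero hn'
            exact_mod_cast this
          rw [hω] at hre
          have hlp : (l*p : ℤ) = n*q := by
            have h2 : (l:ℝ) * (2*π*p) = (n:ℝ) * (2*π) * q := by
              field_simp at hre
              linear_combination (2*π) * hre
            have h3 : ((l*p : ℤ):ℝ) = ((n*q : ℤ):ℝ) := by
              push_cast
              nlinarith [Real.pi_ne_zero, h2, πpos]
            exact_mod_cast h3
          have hdvd2 : (q:ℤ) ∣ l * p := ⟨n, by linarith [hlp]⟩
          have hcop : IsCoprime (q:ℤ) (p:ℤ) := by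
            rw [Int.isCoprime_iff_gcd_eq_one, Int.gcd_natCast_natCast]
            exact hco.symm
          exact hdvd (hcop.dvd_of_dvd_mul_right hdvd2)
        have hzq : Complex.exp (Complex.I * l * ω) ^ q = 1 := by
          rw [← Complex.exp_nat_mul]
          have harg : (q:ℂ) * (Complex.I * l * ω) = ((l*p : ℤ):ℂ) * (2*π*Complex.I) := by
            rw [hωC]
            push_cast
            field_simp
          rw [harg, Complex.exp_int_mul_two_pi_mul_I]
        rw [geom_sum_eq hz1, hzq]
        simp
  · intro hA
    obtain ⟨θ, hsm, hper2, heq, havg⟩ := existence hA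
    refine ⟨θ, ⟨hsm, hper2, (convert_eq θ).mpr heq, havg⟩, ?_⟩
    rintro θ' ⟨_, _, heq', havg'⟩
    exact uniqueness θ' θ ⟨(convert_eq θ').mp heq', havg'⟩ ⟨heq, havg⟩
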